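/- arXiv:1711.04442 — 5 statements merged into one kernel-verified Lean document; each statement's English description precedes it below -/
import Mathlib

section
/- Suppose the pair (u,p) ∈ V × Q satisfies ν·a(u,v) + b(v,p) + γ·j(u,v) = F(v) for all v ∈ V and b(u,q) = 0 for all q ∈ Q. Then β·‖p‖_Q ≤ C_PF·(1 + M/C_σ)·L. (This is the abstract form of the pressure stability estimate (22c) of Lemma 3.2: on the normal-continuous test space the jump penalization vanishes, so the discrete inf-sup condition together with the velocity energy estimate bounds the discrete pressure by the data.) -/
/-!
Testing the velocity equation with `u` itself kills the pressure term (`b u p = 0`), and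
coercivity of `a` together with `j ≥ 0` gives `ν C_σ |||u||| ≤ C_PF L`. Testing with the
inf-sup witness `w ∈ W` kills the jump term (`j u w = 0`), so `b w p = F w - ν a(u, w)`,
which continuity of `a` and the velocity bound control by `C_PF (1 + M / C_σ) L |||w|||`.
The energy norm `|||·|||` is the instance norm `‖·‖` on `V`.
-/

lemma le_mul_norm_of_abs_le_of_poincare {V : Type*} [Norm V] {l2 F : V → ℝ} {C_PF L : ℝ}
    (hL : 0 ≤ L) (hPF : ∀ v, l2 v ≤ C_PF * ‖v‖) (hF : ∀ v, |F v| ≤ L * l2 v) (v : V) :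
    F v ≤ C_PF * L * ‖v‖ :=
  calc F v ≤ L * l2 v := (le_abs_self _).trans (hF v)
    _ ≤ L * (C_PF * ‖v‖) := mul_le_mul_of_nonneg_left (hPF v) hL
    _ = C_PF * L * ‖v‖ := by ring

section

variable {V : Type*} [NormedAddCommGroup V] [Module ℝ V]

lemma mul_norm_le_of_coercive (a j : V →ₗ[ℝ] V →ₗ[ℝ] ℝ) {u : V} {C_σ ν γ K : ℝ}
    (hcoer : C_σ * ‖u‖ ^ 2 ≤ a u u) (hjpos : 0 ≤ j u u) (hν : 0 ≤ ν) (hγ : 0 ≤ γ)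
    (hK : 0 ≤ K) (henergy : ν * a u u + γ * j u u ≤ K * ‖u‖) :
    ν * C_σ * ‖u‖ ≤ K := by
  rcases (norm_nonneg u).eq_or_lt with hu | hu
  · simpa [← hu] using hK
  · refine le_of_mul_le_mul_right ?_ hu
    nlinarith [mul_le_mul_of_nonneg_left hcoer hν, mul_nonneg hγ hjpos]

lemma mul_norm_le_of_forall_mem_le {Q : Type*} [NormedAddCommGroup Q] [Module ℝ Q]
    (b : V →ₗ[ℝ] Q →ₗ[ℝ] ℝ) (W : Submodule ℝ V) {β K : ℝ}
    (hinfsup : ∀ q : Q, ∃ w ∈ W, w ≠ 0 ∧ β * ‖q‖ * ‖w‖ ≤ b w q) (p : Q)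
    (hres : ∀ w ∈ W, b w p ≤ K * ‖w‖) :
    β * ‖p‖ ≤ K := by
  obtain ⟨w, hwW, hw0, hbw⟩ := hinfsup p
  exact le_of_mul_le_mul_right (hbw.trans (hres w hwW)) (norm_pos_iff.mpr hw0)

end

theorem energy_estimate_pressure_general
    (V : Type*) [NormedAddCommGroup V] [NormedSpace ℝ V]
    (Q : Type*) [NormedAddCommGroup Q] [NormedSpace ℝ Q]
    (l2 : V → ℝ)
    (C_PF C_σ M β ν γ L : ℝ)
    (hCPF : 0 < C_PF) (hCσ : 0 < C_σ) (hM : 0 < M)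
    (hν : 0 < ν) (hγ : 0 < γ) (hL : 0 ≤ L)
    (hPF : ∀ v : V, l2 v ≤ C_PF * ‖v‖)
    (a j : V →ₗ[ℝ] V →ₗ[ℝ] ℝ)
    (hcoer : ∀ v : V, C_σ * ‖v‖ ^ 2 ≤ a v v)
    (hbound : ∀ v w : V, |a v w| ≤ M * ‖v‖ * ‖w‖)
    (hjpos : ∀ v : V, 0 ≤ j v v)
    (b : V →ₗ[ℝ] Q →ₗ[ℝ] ℝ)
    (W : Submodule ℝ V)
    (hjW : ∀ v : V, ∀ w ∈ W, j v w = 0)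
    (hinfsup : ∀ q : Q, ∃ w ∈ W, w ≠ 0 ∧ β * ‖q‖ * ‖w‖ ≤ b w q)
    (F : V →ₗ[ℝ] ℝ)
    (hF : ∀ v : V, |F v| ≤ L * l2 v)
    (u : V) (p : Q)
    (hup : ∀ v : V, ν * a u v + b v p + γ * j u v = F v)
    (hdiv : ∀ q : Q, b u q = 0) :
    β * ‖p‖ ≤ C_PF * (1 + M / C_σ) * L := by
  have hdata := le_mul_norm_of_abs_le_of_poincare hL hPF hF
  have hvel : ν * C_σ * ‖u‖ ≤ C_PF * L :=
    mul_norm_le_of_coercive a j (hcoer u) (hjpos u) hν.le hγ.le (by positivity)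
      (by linarith [hup u, hdiv p, hdata u])
  have hνu : M * (ν * ‖u‖) ≤ M / C_σ * (C_PF * L) :=
    calc M * (ν * ‖u‖) = M / C_σ * (ν * C_σ * ‖u‖) := by field_simp
      _ ≤ M / C_σ * (C_PF * L) := by gcongr
  refine mul_norm_le_of_forall_mem_le b W hinfsup p fun w hw => ?_
  have hauw : -(M * ‖u‖ * ‖w‖) ≤ a u w := neg_le_of_abs_le (hbound u w)
  have hupw := hup w
  rw [hjW u w hw, mul_zero, add_zero] at hupw
  calc b w p = F w - ν * a u w := by linarith
    _ ≤ C_PF * L * ‖w‖ + M * (ν * ‖u‖) * ‖w‖ := by nlinarith [hdata w]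
    _ ≤ C_PF * L * ‖w‖ + M / C_σ * (C_PF * L) * ‖w‖ := by gcongr
    _ = C_PF * (1 + M / C_σ) * L * ‖w‖ := by ring

/-- Abstract form of the pressure stability estimate (22c) of Lemma 3.2: on the
normal-continuous test space `W` the jump penalization vanishes, so the discrete
inf-sup condition together with the velocity energy estimate bounds the discrete
pressure by the data. The instance norm `‖·‖` on `V` is the energy norm. -/
theorem energy_estimate_pressure
    (V : Type*) [NormedAddCommGroup V] [NormedSpace ℝ V] [FiniteDimensional ℝ V]
    (Q : Type*) [NormedAddCommGroup Q] [NormedSpace ℝ Q] [FiniteDimensional ℝ Q]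
    (l2 : V → ℝ)
    (hl2_add : ∀ v w : V, l2 (v + w) ≤ l2 v + l2 w)
    (hl2_smul : ∀ (c : ℝ) (v : V), l2 (c • v) = |c| * l2 v)
    (hl2_def : ∀ v : V, l2 v = 0 → v = 0)
    (C_PF C_σ M β ν γ L : ℝ)
    (hCPF : 0 < C_PF) (hCσ : 0 < C_σ) (hM : 0 < M) (hβ : 0 < β)
    (hν : 0 < ν) (hγ : 0 < γ) (hL : 0 ≤ L)
    (hPF : ∀ v : V, l2 v ≤ C_PF * ‖v‖)
    (a j : V →ₗ[ℝ] V →ₗ[ℝ] ℝ)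
    (hcoer : ∀ v : V, C_σ * ‖v‖ ^ 2 ≤ a v v)
    (hbound : ∀ v w : V, |a v w| ≤ M * ‖v‖ * ‖w‖)
    (hjsymm : ∀ v w : V, j v w = j w v)
    (hjpos : ∀ v : V, 0 ≤ j v v)
    (b : V →ₗ[ℝ] Q →ₗ[ℝ] ℝ)
    (W : Submodule ℝ V)
    (hjW : ∀ v : V, ∀ w ∈ W, j v w = 0)
    (hinfsup : ∀ q : Q, ∃ w ∈ W, w ≠ 0 ∧ β * ‖q‖ * ‖w‖ ≤ b w q)
    (F : V →ₗ[ℝ] ℝ)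
    (hF : ∀ v : V, |F v| ≤ L * l2 v)
    (u : V) (p : Q)
    (hup : ∀ v : V, ν * a u v + b v p + γ * j u v = F v)
    (hdiv : ∀ q : Q, b u q = 0) :
    β * ‖p‖ ≤ C_PF * (1 + M / C_σ) * L :=
  energy_estimate_pressure_general V Q l2 C_PF C_σ M β ν γ L hCPF hCσ hM hν hγ hL hPF a j hcoer
    hbound hjpos b W hjW hinfsup F hF u p hup hdiv
end

section
/- Every u ∈ V decomposes uniquely as u = u⁰ + u^⊥ with u⁰ ∈ N and u^⊥ ∈ R, and if u satisfies ν·a(u,v) + γ·j(u,v) = F(v) for all v ∈ V, then the system decouples: ν·a(u⁰,n) = F(n) for all n ∈ N, and ν·a(u^⊥,r) + γ·j(u^⊥,r) = F(r) for all r ∈ R. (This is the abstract form of the decoupled system (45a)–(45b): the component of the penalized DG solution in the weakly divergence-free H(div)-conforming subspace solves the unpenalized problem restricted to that subspace.) -/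
/-- Positive semidefinite symmetric bilinear forms vanish on vectors with zero "norm". -/
lemma psd_zero_diag {V : Type*} [AddCommGroup V] [Module ℝ V]
    (j : V →ₗ[ℝ] V →ₗ[ℝ] ℝ)
    (hjsymm : ∀ v w : V, j v w = j w v)
    (hjpos : ∀ v : V, 0 ≤ j v v)
    (n : V) (hn : j n n = 0) (v : V) : j n v = 0 := by
  by_contra hc
  set c := j n v with hcdef
  have key : ∀ t : ℝ, 0 ≤ t * t * j n n + 2 * t * c + j v v := by
    intro t
    have h0 := hjpos (t • n + v)
    have hexp : j (t • n + v) (t • n + v)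
        = t * t * j n n + 2 * t * c + j v v := by
      simp only [map_add, map_smul, LinearMap.add_apply, LinearMap.smul_apply, smul_eq_mul, hjsymm v n, ← hcdef]
      ring
    linarith [hexp ▸ h0]
  have key2 : ∀ t : ℝ, 0 ≤ 2 * t * c + j v v := by
    intro t; have := key t; rwa [hn, mul_zero, zero_add] at this
  have h2c : (2 * c) ≠ 0 := by positivity
  have hval : 2 * (-(j v v + 1) / (2 * c)) * c = -(j v v + 1) := by
    field_simp
  linarith [key2 (-(j v v + 1) / (2 * c)), hval]

/-- Abstract form of the decoupled system (45a)–(45b): every `u` decomposes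
uniquely as `u = u⁰ + u^⊥` with `u⁰ ∈ N` and `u^⊥` in the `a`-orthogonal
complement `R` of `N`, and if `u` solves the penalized problem then `u⁰` solves
the unpenalized problem restricted to `N` while `u^⊥` solves the penalized
problem restricted to `R`. -/
theorem decoupled_system
    (V : Type*) [AddCommGroup V] [Module ℝ V] [FiniteDimensional ℝ V]
    (a j : V →ₗ[ℝ] V →ₗ[ℝ] ℝ)
    (hasymm : ∀ v w : V, a v w = a w v)
    (hapos : ∀ v : V, v ≠ 0 → 0 < a v v)
    (hjsymm : ∀ v w : V, j v w = j w v)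
    (hjpos : ∀ v : V, 0 ≤ j v v)
    (N : Submodule ℝ V)
    (hN : ∀ n ∈ N, j n n = 0)
    (ν γ : ℝ) (hν : 0 < ν) (hγ : 0 < γ)
    (F : V →ₗ[ℝ] ℝ) :
    (∀ u : V, ∃! w : V × V,
        w.1 ∈ N ∧ (∀ n ∈ N, a w.2 n = 0) ∧ u = w.1 + w.2) ∧
    (∀ u : V, (∀ v : V, ν * a u v + γ * j u v = F v) →
      ∀ u0 uperp : V, u0 ∈ N → (∀ n ∈ N, a uperp n = 0) → u = u0 + uperp →
        (∀ n ∈ N, ν * a u0 n = F n) ∧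
        (∀ r : V, (∀ n ∈ N, a r n = 0) → ν * a uperp r + γ * j uperp r = F r)) := by
  constructor
  · -- existence and uniqueness of decomposition
    intro u
    -- the map N → Dual N induced by a
    let φ : N →ₗ[ℝ] Module.Dual ℝ N :=
      { toFun := fun n => ((a n).comp N.subtype)
        map_add' := by intro x y; ext m; simp
        map_smul' := by intro c x; ext m; simp }
    have hinj : Function.Injective φ := by
      rw [← LinearMap.ker_eq_bot, LinearMap.ker_eq_bot']
      intro m hm
      by_contra hm0
      have : (m : V) ≠ 0 := fun h => hm0 (Subtype.ext h)
      have := hapos m this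
      have : φ m m = a m m := rfl
      rw [hm] at this
      simp at this
      linarith [hapos (m : V) ‹(m : V) ≠ 0›]
    have hsurj : Function.Surjective φ :=
      (LinearMap.injective_iff_surjective_of_finrank_eq_finrank
        (Subspace.dual_finrank_eq).symm).mp hinj
    obtain ⟨n0, hn0⟩ := hsurj ((LinearMap.flip a u).comp N.subtype)
    refine ⟨(n0, u - n0), ⟨n0.2, ?_, by simp⟩, ?_⟩
    · intro n hn
      have := congrFun (congrArg DFunLike.coe hn0) ⟨n, hn⟩
      simp only [LinearMap.comp_apply, Submodule.subtype_apply, LinearMap.flip_apply] at this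
      have hφ : a (n0 : V) n = a n u := this
      have hφ' : a (n0 : V) n = a u n := by rw [hφ, hasymm]
      have : a (u - (n0 : V)) n = a u n - a (n0 : V) n := by simp [map_sub]
      rw [this, hφ', sub_self]
    · rintro ⟨w1, w2⟩ ⟨h1, h2, h3⟩
      have hdN : w1 - (n0 : V) ∈ N := N.sub_mem h1 n0.2
      have heq : w1 - (n0 : V) = (u - n0) - w2 := by
        rw [h3]; abel
      have hz : a (w1 - (n0 : V)) (w1 - (n0 : V)) = 0 := by
        nth_rewrite 1 [heq]
        have hA : a (u - (n0 : V)) (w1 - (n0 : V)) = 0 := by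
          have := congrFun (congrArg DFunLike.coe hn0) ⟨w1 - n0, hdN⟩
          simp only [LinearMap.comp_apply, Submodule.subtype_apply,
            LinearMap.flip_apply] at this
          have hφ : a (n0 : V) (w1 - n0) = a (w1 - (n0:V)) u := this
          have : a (u - (n0 : V)) (w1 - n0)
              = a u (w1 - n0) - a (n0 : V) (w1 - n0) := by
            simp [map_sub]; ring
          rw [this, hφ, hasymm (w1 - (n0:V)) u, sub_self]
        have hB : a w2 (w1 - (n0 : V)) = 0 := h2 _ hdN
        have : a ((u - (n0:V)) - w2) (w1 - (n0:V))
            = a (u - (n0:V)) (w1 - (n0:V)) - a w2 (w1 - (n0:V)) := by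
          simp [map_sub]; ring
        rw [this, hA, hB, sub_zero]
      have : w1 - (n0 : V) = 0 := by
        by_contra h
        exact absurd hz (ne_of_gt (hapos _ h))
      have hw1 : w1 = (n0 : V) := by
        have := sub_eq_zero.mp this; exact this
      have hw2 : w2 = u - (n0 : V) := by
        rw [hw1] at h3; rw [h3]; abel
      exact Prod.ext hw1 hw2
  · intro u hu u0 uperp hu0 hperp hsum
    have hj0 : ∀ v : V, j u0 v = 0 :=
      psd_zero_diag j hjsymm hjpos u0 (hN u0 hu0)
    constructor
    · intro n hn
      have h := hu n
      have hjn : j u n = 0 := by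
        rw [hsum, map_add, LinearMap.add_apply, hj0 n,
          hjsymm uperp n, psd_zero_diag j hjsymm hjpos n (hN n hn) uperp,
          add_zero]
      have hau : a u n = a u0 n := by
        rw [hsum, map_add, LinearMap.add_apply, hperp n hn, add_zero]
      rw [hjn, mul_zero, add_zero, hau] at h
      exact h
    · intro r hr
      have h := hu r
      have hau : a u r = a uperp r := by
        rw [hsum, map_add, LinearMap.add_apply]
        have : a u0 r = 0 := by rw [hasymm]; exact hr u0 hu0
        rw [this, zero_add]
      have hju : j u r = j uperp r := by
        rw [hsum, map_add, LinearMap.add_apply, hj0 r, zero_add]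
      rw [hau, hju] at h
      exact h
end

section
/- Suppose u_γ ∈ V satisfies ν·a(u_γ,v) + γ·j(u_γ,v) = F(v) for all v ∈ V, and û ∈ N satisfies ν·a(û,n) = F(n) for all n ∈ N. Then |||u_γ − û||| ≤ (C_PF/C_R)·γ⁻¹·L; in particular the bound is independent of ν and the penalized solution converges to the limit solution û in the energy norm with rate O(γ⁻¹) as γ → ∞. (This is the abstract form of the velocity estimate (46a) of Theorem 3.8: as the mass-flux penalization parameter γ tends to infinity, the stabilized DG solution converges with rate γ⁻¹ to the weakly divergence-free H(div)-DG solution, so over-stabilization is impossible.) -/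
/-! Testing the penalized equation with `n ∈ N`, on which `j(·, n)` vanishes by Cauchy–Schwarz,
shows that the error `e = u_γ - û` is `a`-orthogonal to `N`, i.e. lies in `R`. Testing it with `e`
itself gives `ν a(e,e) + γ j(e,e) = F(e)`; dropping the nonnegative `a`-term and using the
coercivity of `j` on `R` and the Poincaré–Friedrichs bound on `F` yields
`γ C_R |||e|||² ≤ C_PF L |||e|||`. -/

open LinearMap (BilinForm)

section PenaltyMethod

variable {𝕜 V : Type*} [Field 𝕜] [AddCommGroup V] [Module 𝕜 V] {a j : BilinForm 𝕜 V}
  {F : V →ₗ[𝕜] 𝕜} {N : Submodule 𝕜 V} {ν γ : 𝕜} {uγ uhat : V}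

lemma penalized_sub_limit_apply_eq_zero (hν : ν ≠ 0) (hj : ∀ v w, j v w = j w v)
    (hjN : N ≤ LinearMap.ker j) (huγ : ∀ v, ν * a uγ v + γ * j uγ v = F v)
    (huhat : ∀ n ∈ N, ν * a uhat n = F n) {n : V} (hn : n ∈ N) :
    a (uγ - uhat) n = 0 := by
  have hjn : j uγ n = 0 := by rw [hj, LinearMap.mem_ker.1 (hjN hn), LinearMap.zero_apply]
  have h := huγ n
  rw [hjn, mul_zero, add_zero, ← huhat n hn] at h
  rw [map_sub, LinearMap.sub_apply, mul_left_cancel₀ hν h, sub_self]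

lemma penalized_energy_identity (ha : ∀ v w, a v w = a w v) (hjN : N ≤ LinearMap.ker j)
    (huγ : ∀ v, ν * a uγ v + γ * j uγ v = F v) (huhatN : uhat ∈ N)
    (horth : ∀ n ∈ N, a (uγ - uhat) n = 0) :
    ν * a (uγ - uhat) (uγ - uhat) + γ * j (uγ - uhat) (uγ - uhat) = F (uγ - uhat) := by
  have ha_uhat : a uhat (uγ - uhat) = 0 := by rw [ha, horth uhat huhatN]
  have hj_uhat : j uhat = 0 := LinearMap.mem_ker.1 (hjN huhatN)
  rw [← huγ, map_sub a, map_sub j, LinearMap.sub_apply, LinearMap.sub_apply, ha_uhat, hj_uhat,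
    LinearMap.zero_apply, sub_zero, sub_zero]

end PenaltyMethod

lemma le_div_of_mul_sq_le_mul {α : Type*} [Field α] [LinearOrder α] [IsStrictOrderedRing α]
    {x b c : α} (hx : 0 ≤ x) (hb : 0 ≤ b) (hc : 0 < c)
    (h : c * x ^ 2 ≤ b * x) : x ≤ b / c := by
  rcases hx.eq_or_lt with rfl | hx
  · positivity
  · rw [le_div_iff₀ hc, mul_comm]
    exact le_of_mul_le_mul_right (by rwa [sq, ← mul_assoc] at h) hx

theorem convergence_to_Hdiv_solution_velocity_general
    (V : Type*) [NormedAddCommGroup V] [NormedSpace ℝ V]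
    (l2 : V → ℝ)
    (C_PF C_σ C_R ν γ L : ℝ)
    (hCPF : 0 < C_PF) (hCσ : 0 < C_σ) (hCR : 0 < C_R)
    (hν : 0 < ν) (hγ : 0 < γ) (hL : 0 ≤ L)
    (hPF : ∀ v : V, l2 v ≤ C_PF * ‖v‖)
    (a j : V →ₗ[ℝ] V →ₗ[ℝ] ℝ)
    (hasymm : ∀ v w : V, a v w = a w v)
    (hcoer : ∀ v : V, C_σ * ‖v‖ ^ 2 ≤ a v v)
    (hjsymm : ∀ v w : V, j v w = j w v)
    (hjpos : ∀ v : V, 0 ≤ j v v)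
    (N : Submodule ℝ V)
    (hN : ∀ v : V, v ∈ N ↔ j v v = 0)
    -- coercivity of `j` on the `a`-orthogonal complement `R` of `N`
    -- (such `C_R` exists by finite-dimensional norm equivalence):
    (hjR : ∀ r : V, (∀ n ∈ N, a r n = 0) → C_R * ‖r‖ ^ 2 ≤ j r r)
    (F : V →ₗ[ℝ] ℝ)
    (hF : ∀ v : V, |F v| ≤ L * l2 v)
    (uγ : V)
    (huγ : ∀ v : V, ν * a uγ v + γ * j uγ v = F v)
    (uhat : V) (huhatN : uhat ∈ N)
    (huhat : ∀ n ∈ N, ν * a uhat n = F n) :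
    ‖uγ - uhat‖ ≤ (C_PF / C_R) * γ⁻¹ * L := by
  have hNker : N ≤ LinearMap.ker j := fun n hn ↦
    (LinearMap.BilinForm.apply_apply_same_eq_zero_iff j hjpos ⟨hjsymm⟩).1 ((hN n).1 hn)
  have horth : ∀ n ∈ N, a (uγ - uhat) n = 0 := fun n hn ↦
    penalized_sub_limit_apply_eq_zero hν.ne' hjsymm hNker huγ huhat hn
  set e := uγ - uhat
  have hbound : γ * C_R * ‖e‖ ^ 2 ≤ C_PF * L * ‖e‖ := calc
    γ * C_R * ‖e‖ ^ 2 ≤ γ * j e e := by rw [mul_assoc]; gcongr; exact hjR e horth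
    _ ≤ ν * a e e + γ * j e e := by
      have hae : 0 ≤ a e e := (mul_nonneg hCσ.le (sq_nonneg _)).trans (hcoer e)
      exact le_add_of_nonneg_left (mul_nonneg hν.le hae)
    _ = F e := penalized_energy_identity hasymm hNker huγ huhatN horth
    _ ≤ L * l2 e := (le_abs_self _).trans (hF e)
    _ ≤ L * (C_PF * ‖e‖) := by gcongr; exact hPF e
    _ = C_PF * L * ‖e‖ := by ring
  calc ‖e‖ ≤ C_PF * L / (γ * C_R) :=
        le_div_of_mul_sq_le_mul (norm_nonneg e) (by positivity) (by positivity) hbound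
    _ = C_PF / C_R * γ⁻¹ * L := by field_simp

/-- Abstract form of the velocity estimate (46a) of Theorem 3.8: as the
mass-flux penalization parameter `γ` tends to infinity, the stabilized DG
solution `u_γ` converges in the energy norm (the instance norm of `V`) with
rate `γ⁻¹` to the weakly divergence-free `H(div)`-DG solution `û`, with a
bound independent of `ν`; in particular over-stabilization is impossible. -/
theorem convergence_to_Hdiv_solution_velocity
    (V : Type*) [NormedAddCommGroup V] [NormedSpace ℝ V] [FiniteDimensional ℝ V]
    (l2 : V → ℝ)
    (hl2_add : ∀ v w : V, l2 (v + w) ≤ l2 v + l2 w)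
    (hl2_smul : ∀ (c : ℝ) (v : V), l2 (c • v) = |c| * l2 v)
    (hl2_def : ∀ v : V, l2 v = 0 → v = 0)
    (C_PF C_σ C_R ν γ L : ℝ)
    (hCPF : 0 < C_PF) (hCσ : 0 < C_σ) (hCR : 0 < C_R)
    (hν : 0 < ν) (hγ : 0 < γ) (hL : 0 ≤ L)
    (hPF : ∀ v : V, l2 v ≤ C_PF * ‖v‖)
    (a j : V →ₗ[ℝ] V →ₗ[ℝ] ℝ)
    (hasymm : ∀ v w : V, a v w = a w v)
    (hcoer : ∀ v : V, C_σ * ‖v‖ ^ 2 ≤ a v v)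
    (hjsymm : ∀ v w : V, j v w = j w v)
    (hjpos : ∀ v : V, 0 ≤ j v v)
    (N : Submodule ℝ V)
    (hN : ∀ v : V, v ∈ N ↔ j v v = 0)
    -- coercivity of `j` on the `a`-orthogonal complement `R` of `N`
    -- (such `C_R` exists by finite-dimensional norm equivalence):
    (hjR : ∀ r : V, (∀ n ∈ N, a r n = 0) → C_R * ‖r‖ ^ 2 ≤ j r r)
    (F : V →ₗ[ℝ] ℝ)
    (hF : ∀ v : V, |F v| ≤ L * l2 v)
    (uγ : V)
    (huγ : ∀ v : V, ν * a uγ v + γ * j uγ v = F v)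
    (uhat : V) (huhatN : uhat ∈ N)
    (huhat : ∀ n ∈ N, ν * a uhat n = F n) :
    ‖uγ - uhat‖ ≤ (C_PF / C_R) * γ⁻¹ * L :=
  convergence_to_Hdiv_solution_velocity_general V l2 C_PF C_σ C_R ν γ L hCPF hCσ hCR hν hγ hL hPF a
    j hasymm hcoer hjsymm hjpos N hN hjR F hF uγ huγ uhat huhatN huhat
end

section
/- Suppose (u_γ, p_γ) ∈ V × Q satisfies ν·a(u_γ,v) + b(v,p_γ) + γ·j(u_γ,v) = F(v) for all v ∈ V, and (û, p̂) ∈ W × Q satisfies ν·a(û,w) + b(w,p̂) = F(w) for all w ∈ W. Then b(w, p_γ − p̂) = ν·a(û − u_γ, w) for all w ∈ W, and consequently β·‖p_γ − p̂‖_Q ≤ ν·M·|||û − u_γ|||. (This is the abstract form of the pressure estimate (46b) of Theorem 3.8: combined with the O(γ⁻¹) velocity convergence it gives ‖p_γ − p̂‖_Q ≤ C·γ⁻¹·ν·L, so the stabilized DG pressure converges to the H(div)-DG pressure as γ → ∞.) -/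
/-- Abstract form of the pressure estimate (46b) of Theorem 3.8: on the
normal-continuous subspace `W` the penalization vanishes, so subtracting the
two discrete problems gives `b(w, p_γ − p̂) = ν·a(û − u_γ, w)` for all `w ∈ W`,
and the discrete inf-sup condition yields
`β·‖p_γ − p̂‖ ≤ ν·M·|||û − u_γ|||`. -/
theorem convergence_to_Hdiv_solution_pressure
    (V : Type*) [NormedAddCommGroup V] [NormedSpace ℝ V] [FiniteDimensional ℝ V]
    (Q : Type*) [NormedAddCommGroup Q] [NormedSpace ℝ Q] [FiniteDimensional ℝ Q]
    (M β ν γ : ℝ)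
    (hM : 0 < M) (hβ : 0 < β) (hν : 0 < ν) (hγ : 0 < γ)
    (a j : V →ₗ[ℝ] V →ₗ[ℝ] ℝ)
    (hbound : ∀ v w : V, |a v w| ≤ M * ‖v‖ * ‖w‖)
    (b : V →ₗ[ℝ] Q →ₗ[ℝ] ℝ)
    (W : Submodule ℝ V)
    (hjW : ∀ v : V, ∀ w ∈ W, j v w = 0)
    (hinfsup : ∀ q : Q, ∃ w ∈ W, w ≠ 0 ∧ β * ‖q‖ * ‖w‖ ≤ b w q)
    (F : V →ₗ[ℝ] ℝ)
    (uγ : V) (pγ : Q)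
    (huγ : ∀ v : V, ν * a uγ v + b v pγ + γ * j uγ v = F v)
    (uhat : V) (phat : Q) (huhatW : uhat ∈ W)
    (huhat : ∀ w ∈ W, ν * a uhat w + b w phat = F w) :
    (∀ w ∈ W, b w (pγ - phat) = ν * a (uhat - uγ) w) ∧
    β * ‖pγ - phat‖ ≤ ν * M * ‖uhat - uγ‖ := by
  have key : ∀ w ∈ W, b w (pγ - phat) = ν * a (uhat - uγ) w := by
    intro w hw
    have h1 := huγ w
    have h2 := huhat w hw
    have hj := hjW uγ w hw
    simp only [map_sub, LinearMap.sub_apply]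
    rw [hj, mul_zero, add_zero] at h1
    have := h1.trans h2.symm
    linarith
  refine ⟨key, ?_⟩
  obtain ⟨w, hw, hw0, hle⟩ := hinfsup (pγ - phat)
  have hwn : 0 < ‖w‖ := norm_pos_iff.mpr hw0
  have hb := hbound (uhat - uγ) w
  have : β * ‖pγ - phat‖ * ‖w‖ ≤ ν * M * ‖uhat - uγ‖ * ‖w‖ := by
    calc β * ‖pγ - phat‖ * ‖w‖ ≤ b w (pγ - phat) := hle
    _ = ν * a (uhat - uγ) w := key w hw
    _ ≤ ν * (M * ‖uhat - uγ‖ * ‖w‖) := by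
        have := le_abs_self (a (uhat - uγ) w)
        nlinarith
    _ = ν * M * ‖uhat - uγ‖ * ‖w‖ := by ring
  exact le_of_mul_le_mul_right this hwn
end

section
/- Suppose e ∈ V and constants X ≥ 0, P ≥ 0 satisfy ν·a(e,e) + γ·j(e,e) ≤ ν·M·X·|||e||| + P·√(γ·j(e,e)). Then |||e||| ≤ (M/C_σ)·X + (ν·C_σ)^(−1/2)·P. (This is the quantitative core of the velocity error estimate (32a) of Theorem 3.4: applied with X the interpolation error of the velocity in the stronger energy norm and P of order γ^(−1/2) times the pressure interpolation error, it yields |||u − u_h|||_e ≤ C·[|||η^u|||_{e,♯} + γ^(−1/2)·ν^(−1/2)·‖η^p‖_{L²}], i.e. the mass-flux penalization reduces the pressure contribution to the velocity error from scaling ν⁻¹ to γ^(−1/2)·ν^(−1/2).) -/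
set_option maxHeartbeats 1000000 in
/-- Quantitative core of the velocity error estimate (32a) of Theorem 3.4:
if the discretization error `e` satisfies the inequality obtained from Galerkin
orthogonality, coercivity, boundedness and Cauchy–Schwarz, then
`|||e||| ≤ (M/C_σ)·X + (ν·C_σ)^(−1/2)·P`; the mass-flux penalization reduces
the pressure contribution from scaling `ν⁻¹` to `γ^(−1/2)·ν^(−1/2)`. -/
theorem velocity_error_estimate_core
    (V : Type*) [NormedAddCommGroup V] [NormedSpace ℝ V] [FiniteDimensional ℝ V]
    (C_σ M ν γ X P : ℝ)
    (hCσ : 0 < C_σ) (hM : 0 < M) (hν : 0 < ν) (hγ : 0 < γ)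
    (hX : 0 ≤ X) (hP : 0 ≤ P)
    (a j : V →ₗ[ℝ] V →ₗ[ℝ] ℝ)
    (hcoer : ∀ v : V, C_σ * ‖v‖ ^ 2 ≤ a v v)
    (hjsymm : ∀ v w : V, j v w = j w v)
    (hjpos : ∀ v : V, 0 ≤ j v v)
    (e : V)
    (he : ν * a e e + γ * j e e ≤ ν * M * X * ‖e‖ + P * Real.sqrt (γ * j e e)) :
    ‖e‖ ≤ (M / C_σ) * X + (Real.sqrt (ν * C_σ))⁻¹ * P := by
  set t := ‖e‖ with ht
  have ht0 : 0 ≤ t := norm_nonneg e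
  set s := Real.sqrt (γ * j e e) with hs
  have hs0 : 0 ≤ s := Real.sqrt_nonneg _
  have hsq : s ^ 2 = γ * j e e := by
    rw [hs, Real.sq_sqrt (mul_nonneg hγ.le (hjpos e))]
  set r := Real.sqrt (ν * C_σ) with hr
  have hr0 : 0 < r := Real.sqrt_pos.2 (mul_pos hν hCσ)
  have hrsq : r ^ 2 = ν * C_σ := Real.sq_sqrt (mul_pos hν hCσ).le
  have hco : C_σ * t ^ 2 ≤ a e e := hcoer e
  clear_value t s r
  have key : ν * C_σ * t ^ 2 + s ^ 2 ≤ ν * M * X * t + P * s := by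
    nlinarith [he, mul_le_mul_of_nonneg_left hco hν.le]
  by_contra hcon
  push_neg at hcon
  have have1 : P * s - s ^ 2 ≤ P ^ 2 / 4 := by nlinarith [sq_nonneg (s - P / 2)]
  set b := M / C_σ * X with hbdef
  set q := r⁻¹ * P with hqdef
  have hb : 0 ≤ b := by positivity
  have hc : 0 ≤ q := by positivity
  have hCb : C_σ * b = M * X := by rw [hbdef]; field_simp
  have hrq : r * q = P := by rw [hqdef]; field_simp
  clear_value b q
  have hP2 : P ^ 2 = ν * C_σ * q ^ 2 := by rw [← hrq, ← hrsq]; ring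
  have hMX : ν * M * X * t = ν * C_σ * b * t := by linear_combination (-(ν * t)) * hCb
  have key2 : ν * C_σ * t ^ 2 ≤ ν * C_σ * b * t + ν * C_σ * q ^ 2 / 4 := by
    nlinarith [key, have1]
  have key3 : t ^ 2 ≤ b * t + q ^ 2 / 4 := by
    have hpos : 0 < ν * C_σ := mul_pos hν hCσ
    nlinarith [key2]
  have h1 : 0 < t := lt_of_le_of_lt (add_nonneg hb hc) hcon
  have h2 : t * (b + q) < t * t := mul_lt_mul_of_pos_left hcon h1
  have h3 : q * q ≤ q * t := mul_le_mul_of_nonneg_left (by linarith) hc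
  nlinarith [key3, h2, h3, sq_nonneg q]
end
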